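/- arXiv:1706.04135 — 2 statements merged into one kernel-verified Lean document; each statement's English description precedes it below -/
import Mathlib

section
/- The fan F_ω is 1/3-homogeneous. -/
open Set Filter Topology Metric

namespace FansHomogeneity

/-- `A` is an arc in `X` with endpoints `p` and `q`. -/
def IsArcWith {X : Type*} [TopologicalSpace X] (A : Set X) (p q : X) : Prop :=
  ∃ h : unitInterval ≃ₜ A, (h 0 : X) = p ∧ (h 1 : X) = q

/-- `A` is the (possibly degenerate) arc with endpoints `p` and `q`:
either `p = q` and `A = {p}`, or `A` is an arc from `p` to `q`. -/
def IsArcOrPt {X : Type*} [TopologicalSpace X] (A : Set X) (p q : X) : Prop :=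
  (p = q ∧ A = {p}) ∨ IsArcWith A p q

/-- A subcontinuum of a space: a nonempty compact connected subset. -/
def IsSubcontinuum {X : Type*} [TopologicalSpace X] (A : Set X) : Prop :=
  IsCompact A ∧ IsConnected A

/-- A space is hereditarily unicoherent if the intersection of any two subcontinua
is connected. -/
def HereditarilyUnicoherent (X : Type*) [TopologicalSpace X] : Prop :=
  ∀ A B : Set X, IsSubcontinuum A → IsSubcontinuum B → IsPreconnected (A ∩ B)

/-- A space is arcwise connected if any two distinct points are the endpoints of an arc. -/
def ArcwiseConnected (X : Type*) [TopologicalSpace X] : Prop :=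
  ∀ p q : X, p ≠ q → ∃ A : Set X, IsArcWith A p q

/-- A dendroid: an arcwise connected, hereditarily unicoherent continuum
(nonempty compact connected metric space). -/
def IsDendroid (X : Type*) [MetricSpace X] : Prop :=
  CompactSpace X ∧ ConnectedSpace X ∧ ArcwiseConnected X ∧ HereditarilyUnicoherent X

/-- `p` has order at least `n`: `p` is a common endpoint of `n` arcs in `X` which
pairwise intersect only in `p`. -/
def OrderGe (X : Type*) [TopologicalSpace X] (p : X) (n : ℕ) : Prop :=
  ∃ F : Fin n → Set X, (∀ i, ∃ q : X, IsArcWith (F i) p q) ∧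
    ∀ i j, i ≠ j → F i ∩ F j = {p}

/-- The endpoints of `X`: points of order exactly `1`. -/
def endpoints (X : Type*) [TopologicalSpace X] : Set X :=
  {p | OrderGe X p 1 ∧ ¬ OrderGe X p 2}

/-- The ordinary points of `X`: points of order exactly `2`. -/
def ordinaryPoints (X : Type*) [TopologicalSpace X] : Set X :=
  {p | OrderGe X p 2 ∧ ¬ OrderGe X p 3}

/-- The ramification points of `X`: points of order greater than `2`. -/
def ramificationPoints (X : Type*) [TopologicalSpace X] : Set X :=
  {p | OrderGe X p 3}

/-- A fan with top `t`: a dendroid whose unique ramification point is `t`. -/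
def IsFanWithTop (X : Type*) [MetricSpace X] (t : X) : Prop :=
  IsDendroid X ∧ ramificationPoints X = {t}

/-- A fan: a dendroid with exactly one ramification point. -/
def IsFan (X : Type*) [MetricSpace X] : Prop :=
  ∃ t : X, IsFanWithTop X t

/-- The orbit of a point under the action of the homeomorphism group of `X`. -/
def orbit (X : Type*) [TopologicalSpace X] (x : X) : Set X :=
  {y | ∃ h : X ≃ₜ X, h x = y}

/-- `A` is an orbit of the action of the homeomorphism group of `X` on `X`. -/
def IsOrbit (X : Type*) [TopologicalSpace X] (A : Set X) : Prop :=
  ∃ x : X, A = orbit X x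

/-- The set of orbits of the action of the homeomorphism group of `X` on `X`. -/
def orbits (X : Type*) [TopologicalSpace X] : Set (Set X) :=
  {A | IsOrbit X A}

/-- `X` is `1/n`-homogeneous (has homogeneity degree `n`): the action of the
homeomorphism group of `X` on `X` has exactly `n` orbits. -/
def OneOverHomogeneous (X : Type*) [TopologicalSpace X] (n : ℕ) : Prop :=
  (orbits X).ncard = n

/-- A fan `X` with top `t` is smooth at `t` with respect to `a` if for every sequence
converging to `a` the arcs from `t` converge, in the Hausdorff metric, to the arc `t a`. -/
def SmoothAt (X : Type*) [MetricSpace X] (t a : X) : Prop :=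
  ∀ (α : ℕ → X) (A : ℕ → Set X) (B : Set X),
    Tendsto α atTop (nhds a) → (∀ n, IsArcOrPt (A n) t (α n)) → IsArcOrPt B t a →
    Tendsto (fun n => hausdorffDist (A n) B) atTop (nhds 0)

/-- `S(X)`: the set of points `a` such that `X` is smooth at the top `t` with respect to `a`. -/
def smoothSet (X : Type*) [MetricSpace X] (t : X) : Set X :=
  {a | SmoothAt X t a}

/-- A smooth fan with top `t`. -/
def IsSmoothFanWithTop (X : Type*) [MetricSpace X] (t : X) : Prop :=
  IsFanWithTop X t ∧ smoothSet X t = univ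

/-- A smooth fan. -/
def IsSmoothFan (X : Type*) [MetricSpace X] : Prop :=
  ∃ t : X, IsSmoothFanWithTop X t

/-- The relation on `cantorSet × [0,1]` generating the identification of
`cantorSet × {1}` to a point. -/
def cantorFanRel (a b : ↥cantorSet × unitInterval) : Prop :=
  a.2 = 1 ∧ b.2 = 1

/-- The Cantor fan: the quotient `(C × [0,1]) / (C × {1})` where `C` is the
middle-thirds Cantor set. -/
def CantorFan : Type := Quot cantorFanRel

instance : TopologicalSpace CantorFan :=
  instTopologicalSpaceQuot

/-- The fan `F_ω ⊆ ℝ²`: the union of the segments from `(0,0)` to `(1/i, 1/i²)`, `i ≥ 1`. -/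
def Fomega : Set (ℝ × ℝ) :=
  ⋃ i : ℕ, segment ℝ ((0, 0) : ℝ × ℝ) ((1 / ((i : ℝ) + 1), 1 / ((i : ℝ) + 1) ^ 2) : ℝ × ℝ)

/-- The shrinking Cantor fan `F_{C_ω} ⊆ ℝ²`: for each `i ≥ 1` the union of the segments
from the origin to `(c, 1/2^(i-1))` for `c ∈ C ∩ [(3^(i-1)-1)/3^(i-1), (3^i-2)/3^i]`
(here indexed by `i - 1 ∈ ℕ`). -/
def shrinkingCantorFan : Set (ℝ × ℝ) :=
  ⋃ i : ℕ, ⋃ c ∈ cantorSet ∩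
      Icc (((3 : ℝ) ^ i - 1) / 3 ^ i) (((3 : ℝ) ^ (i + 1) - 2) / 3 ^ (i + 1)),
    segment ℝ ((0, 0) : ℝ × ℝ) ((c, (1 / 2 : ℝ) ^ i) : ℝ × ℝ)

/-- `S` is a simple `n`-od in the plane: the union of `n` straight line segments
which pairwise intersect exactly in a common endpoint. -/
def IsSimpleNod (n : ℕ) (S : Set (ℝ × ℝ)) : Prop :=
  ∃ (o : ℝ × ℝ) (b : Fin n → ℝ × ℝ),
    (∀ i, b i ≠ o) ∧
    S = ⋃ i, segment ℝ o (b i) ∧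
    ∀ i j, i ≠ j → segment ℝ o (b i) ∩ segment ℝ o (b j) = {o}

/-- `X` is colocally connected at `p`: every neighborhood of `p` contains a
neighborhood `V` of `p` such that `X - V` is connected. -/
def ColocallyConnectedAt (X : Type*) [TopologicalSpace X] (p : X) : Prop :=
  ∀ U ∈ nhds p, ∃ V ∈ nhds p, V ⊆ U ∧ IsPreconnected Vᶜ

/-- `X` is homeomorphic to the Lelek fan, i.e. to a smooth fan whose set of
endpoints is dense in it. -/
def HomeoToLelekFan (X : Type*) [TopologicalSpace X] : Prop :=
  ∃ (Y : Type) (m : MetricSpace Y),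
    @IsSmoothFan Y m ∧
    @Dense Y (@UniformSpace.toTopologicalSpace Y
        (@PseudoMetricSpace.toUniformSpace Y m.toPseudoMetricSpace))
      (@endpoints Y (@UniformSpace.toTopologicalSpace Y
        (@PseudoMetricSpace.toUniformSpace Y m.toPseudoMetricSpace))) ∧
    Nonempty (@Homeomorph X Y _ (@UniformSpace.toTopologicalSpace Y
        (@PseudoMetricSpace.toUniformSpace Y m.toPseudoMetricSpace)))

/-!
Every point of `F_ω` is the top `o`, an endpoint `b_i`, or an interior point `t • b_i`,
`0 < t < 1`, of a leg. Homeomorphisms acting leg by leg (swapping two legs, or reparametrising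
one leg by `t ↦ t ^ a`) carry every endpoint to `b_1` and every interior point to `b_1 / 2`,
so there are at most three orbits. Removing a point tells them apart: `F_ω \ {b_1}` is connected;
`F_ω \ {b_1 / 2}` is disconnected (`x + y = 1` meets `F_ω` only at `b_1 / 2`) but the union of
two connected sets; and `F_ω \ {o}` is not the union of two connected sets, since each connected
subset of it lies in a single leg (the inverse slope `x / y` is the constant `i` on the leg
`o b_i` minus `o`).
-/

section Homogeneity

variable {X : Type*} [TopologicalSpace X]

theorem mem_orbit_self (x : X) : x ∈ orbit X x := ⟨Homeomorph.refl X, rfl⟩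

theorem mem_orbit_symm {x y : X} (h : y ∈ orbit X x) : x ∈ orbit X y := by
  obtain ⟨g, rfl⟩ := h
  exact ⟨g.symm, g.symm_apply_apply x⟩

theorem orbit_eq_of_mem {x y : X} (h : y ∈ orbit X x) : orbit X y = orbit X x := by
  obtain ⟨g, rfl⟩ := h
  ext z
  constructor
  · rintro ⟨f, rfl⟩
    exact ⟨g.trans f, rfl⟩
  · rintro ⟨f, rfl⟩
    exact ⟨g.symm.trans f, by simp⟩

theorem oneOverHomogeneous_three {a b c : X}
    (hcover : ∀ x, x ∈ orbit X a ∨ x ∈ orbit X b ∨ x ∈ orbit X c)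
    (hab : b ∉ orbit X a) (hac : c ∉ orbit X a) (hbc : c ∉ orbit X b) :
    OneOverHomogeneous X 3 := by
  have horbits : orbits X = {orbit X a, orbit X b, orbit X c} := by
    ext s
    constructor
    · rintro ⟨x, rfl⟩
      rcases hcover x with h | h | h <;> simp [orbit_eq_of_mem h]
    · rintro (rfl | rfl | rfl)
      exacts [⟨a, rfl⟩, ⟨b, rfl⟩, ⟨c, rfl⟩]
  refine ncard_eq_three.2 ⟨_, _, _, fun h => hab ?_, fun h => hac ?_, fun h => hbc ?_, horbits⟩
  all_goals rw [h]; exact mem_orbit_self _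

theorem isPreconnected_compl_singleton_iff_of_mem_orbit {x y : X} (h : y ∈ orbit X x) :
    IsPreconnected ({y}ᶜ : Set X) ↔ IsPreconnected ({x}ᶜ : Set X) := by
  obtain ⟨g, rfl⟩ := h
  rw [← image_singleton, ← g.image_compl, g.isInducing.isPreconnected_image]

def IsUnionOfTwoPreconnected (s : Set X) : Prop :=
  ∃ A B : Set X, IsPreconnected A ∧ IsPreconnected B ∧ A ∪ B = s

theorem isUnionOfTwoPreconnected_image_iff {Y : Type*} [TopologicalSpace Y] {f : X → Y}
    (hf : IsEmbedding f) {s : Set X} :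
    IsUnionOfTwoPreconnected (f '' s) ↔ IsUnionOfTwoPreconnected s := by
  constructor
  · rintro ⟨A, B, hA, hB, hAB⟩
    have hpre : ∀ C ⊆ f '' s, IsPreconnected C → IsPreconnected (f ⁻¹' C) := by
      intro C hC hCc
      rwa [← hf.isInducing.isPreconnected_image,
        image_preimage_eq_of_subset (hC.trans (image_subset_range f s))]
    refine ⟨f ⁻¹' A, f ⁻¹' B, hpre A (hAB ▸ subset_union_left) hA,
      hpre B (hAB ▸ subset_union_right) hB, ?_⟩
    rw [← preimage_union, hAB, hf.injective.preimage_image]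
  · rintro ⟨A, B, hA, hB, rfl⟩
    exact ⟨f '' A, f '' B, hA.image f hf.continuous.continuousOn,
      hB.image f hf.continuous.continuousOn, (image_union f A B).symm⟩

theorem isUnionOfTwoPreconnected_compl_singleton_iff_of_mem_orbit {x y : X}
    (h : y ∈ orbit X x) :
    IsUnionOfTwoPreconnected ({y}ᶜ : Set X) ↔ IsUnionOfTwoPreconnected ({x}ᶜ : Set X) := by
  obtain ⟨g, rfl⟩ := h
  rw [← image_singleton, ← g.image_compl, isUnionOfTwoPreconnected_image_iff g.isEmbedding]

end Homogeneity

theorem image_val_compl_singleton {α : Type*} {S : Set α} (x : S) :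
    ((↑) : S → α) '' {x}ᶜ = S \ {(x : α)} := by
  rw [image_val_compl, image_singleton]

theorem subsingleton_of_isPreconnected_of_subset_range_natCast {s : Set ℝ}
    (hs : IsPreconnected s) (hsub : s ⊆ range ((↑) : ℕ → ℝ)) : s.Subsingleton := by
  rw [← image_preimage_eq_of_subset hsub] at hs ⊢
  exact ((Nat.isClosedEmbedding_coe_real.isInducing.isPreconnected_image.1 hs).subsingleton).image _

noncomputable section Geometry

-- `tip i` is the endpoint `b_{i+1}` of `F_ω`: legs are indexed from `0`.
def tip (i : ℕ) : ℝ × ℝ := (1 / ((i : ℝ) + 1), 1 / ((i : ℝ) + 1) ^ 2)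

def leg (i : ℕ) : Set (ℝ × ℝ) := (· • tip i) '' Icc (0 : ℝ) 1

theorem Fomega_eq_iUnion_leg : Fomega = ⋃ i, leg i := by
  simp [Fomega, leg, tip, segment_eq_image']

theorem mem_Fomega {p : ℝ × ℝ} :
    p ∈ Fomega ↔ ∃ i, ∃ t ∈ Icc (0 : ℝ) 1, t • tip i = p := by
  simp [Fomega_eq_iUnion_leg, leg]

theorem smul_tip_mem_leg (i : ℕ) {t : ℝ} (ht : t ∈ Icc (0 : ℝ) 1) : t • tip i ∈ leg i :=
  mem_image_of_mem _ ht

theorem smul_tip_mem_Fomega (i : ℕ) {t : ℝ} (ht : t ∈ Icc (0 : ℝ) 1) :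
    t • tip i ∈ Fomega :=
  mem_Fomega.2 ⟨i, t, ht, rfl⟩

theorem zero_mem_leg (i : ℕ) : (0 : ℝ × ℝ) ∈ leg i := by
  simpa using smul_tip_mem_leg i (left_mem_Icc.2 zero_le_one)

theorem zero_mem_Fomega : (0 : ℝ × ℝ) ∈ Fomega := by
  simpa using smul_tip_mem_Fomega 0 (left_mem_Icc.2 zero_le_one)

theorem tip_mem_Fomega (i : ℕ) : tip i ∈ Fomega := by
  simpa using smul_tip_mem_Fomega i (right_mem_Icc.2 zero_le_one)

theorem isCompact_leg (i : ℕ) : IsCompact (leg i) :=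
  isCompact_Icc.image (continuous_id.smul continuous_const)

theorem isPreconnected_leg (i : ℕ) : IsPreconnected (leg i) :=
  isPreconnected_Icc.image _ (continuous_id.smul continuous_const).continuousOn

theorem smul_tip_fst (t : ℝ) (i : ℕ) : (t • tip i).1 = t / (i + 1) := by
  simp [tip, div_eq_mul_inv]

theorem smul_tip_snd (t : ℝ) (i : ℕ) : (t • tip i).2 = t / (i + 1) ^ 2 := by
  simp [tip, div_eq_mul_inv]

theorem smul_tip_snd_ne_zero {t : ℝ} (ht : t ≠ 0) (i : ℕ) : (t • tip i).2 ≠ 0 := by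
  rw [smul_tip_snd]
  positivity

theorem tip_ne_zero (i : ℕ) : tip i ≠ 0 := fun h => by
  simpa using smul_tip_snd_ne_zero one_ne_zero i (by rw [one_smul, h]; rfl)

def invSlope (p : ℝ × ℝ) : ℝ := p.1 / p.2

theorem invSlope_smul_tip {t : ℝ} (ht : t ≠ 0) (i : ℕ) : invSlope (t • tip i) = i + 1 := by
  rw [invSlope, smul_tip_fst, smul_tip_snd]
  field_simp

theorem continuousOn_invSlope : ContinuousOn invSlope {p | p.2 ≠ 0} :=
  continuousOn_fst.div continuousOn_snd fun _ hp => hp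

theorem smul_tip_inj {t u : ℝ} {i j : ℕ} (h : t • tip i = u • tip j) (ht : t ≠ 0) :
    i = j ∧ t = u := by
  have hu : u ≠ 0 := by
    rintro rfl
    exact smul_tip_snd_ne_zero ht i (by rw [h, zero_smul]; rfl)
  have hij : i = j := by
    have := invSlope_smul_tip ht i
    rw [h, invSlope_smul_tip hu] at this
    exact_mod_cast (add_right_cancel this).symm
  subst hij
  exact ⟨rfl, smul_left_injective ℝ (tip_ne_zero i) h⟩

theorem smul_tip_eq_zero {t : ℝ} {i : ℕ} : t • tip i = 0 ↔ t = 0 := by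
  simp [tip_ne_zero i]

theorem smul_tip_mem_leg_iff {t : ℝ} (ht : t ∈ Icc (0 : ℝ) 1) (ht0 : t ≠ 0) {i j : ℕ} :
    t • tip i ∈ leg j ↔ i = j :=
  ⟨fun ⟨_, _, hu⟩ => (smul_tip_inj hu.symm ht0).1,
    by rintro rfl; exact smul_tip_mem_leg i ht⟩

theorem exists_subset_leg_of_isPreconnected {A : Set (ℝ × ℝ)} (hA : IsPreconnected A)
    (hAF : A ⊆ Fomega \ {0}) : ∃ k, A ⊆ leg k := by
  have hrep : ∀ p ∈ A, ∃ k, ∃ t ∈ Icc (0 : ℝ) 1, t ≠ 0 ∧ t • tip k = p := by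
    intro p hp
    obtain ⟨k, t, ht, rfl⟩ := mem_Fomega.1 (hAF hp).1
    exact ⟨k, t, ht, fun h0 => (hAF hp).2 (by simp [h0]), rfl⟩
  have hcont : ContinuousOn invSlope A := continuousOn_invSlope.mono fun p hp => by
    obtain ⟨k, t, -, ht0, rfl⟩ := hrep p hp
    exact smul_tip_snd_ne_zero ht0 k
  have hsub : (invSlope '' A).Subsingleton := by
    refine subsingleton_of_isPreconnected_of_subset_range_natCast (hA.image _ hcont) ?_
    rintro _ ⟨p, hp, rfl⟩
    obtain ⟨k, t, -, ht0, rfl⟩ := hrep p hp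
    exact ⟨k + 1, by rw [invSlope_smul_tip ht0]; push_cast; rfl⟩
  rcases A.eq_empty_or_nonempty with rfl | ⟨a, ha⟩
  · exact ⟨0, empty_subset _⟩
  obtain ⟨k, t, -, ht0, rfl⟩ := hrep a ha
  refine ⟨k, fun p hp => ?_⟩
  obtain ⟨j, u, hu, hu0, rfl⟩ := hrep p hp
  have : (j : ℝ) + 1 = k + 1 := by
    rw [← invSlope_smul_tip hu0, ← invSlope_smul_tip ht0]
    exact hsub (mem_image_of_mem _ hp) (mem_image_of_mem _ ha)
  obtain rfl : j = k := by exact_mod_cast add_right_cancel this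
  exact smul_tip_mem_leg j hu

theorem not_isUnionOfTwoPreconnected_Fomega_diff_zero :
    ¬ IsUnionOfTwoPreconnected (Fomega \ {0}) := by
  rintro ⟨A, B, hA, hB, hAB⟩
  obtain ⟨i, hi⟩ := exists_subset_leg_of_isPreconnected hA (hAB ▸ subset_union_left)
  obtain ⟨j, hj⟩ := exists_subset_leg_of_isPreconnected hB (hAB ▸ subset_union_right)
  have hmem : (1 : ℝ) • tip (i + j + 1) ∈ A ∪ B := by
    rw [hAB, one_smul]
    exact ⟨tip_mem_Fomega _, tip_ne_zero _⟩
  rcases hmem with h | h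
  · have := (smul_tip_mem_leg_iff (right_mem_Icc.2 zero_le_one) one_ne_zero).1 (hi h)
    omega
  · have := (smul_tip_mem_leg_iff (right_mem_Icc.2 zero_le_one) one_ne_zero).1 (hj h)
    omega

theorem eq_half_smul_tip_zero_of_fst_add_snd_eq_one {p : ℝ × ℝ} (hp : p ∈ Fomega)
    (h : p.1 + p.2 = 1) : p = (1 / 2 : ℝ) • tip 0 := by
  obtain ⟨k, t, ⟨ht0, ht1⟩, rfl⟩ := mem_Fomega.1 hp
  rw [smul_tip_fst, smul_tip_snd] at h
  rcases k with _ | k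
  · congr 1
    norm_num at h
    linarith
  · exfalso
    have hk : (2 : ℝ) ≤ (k + 1 : ℕ) + 1 := by norm_cast; omega
    have h1 : t / ((k + 1 : ℕ) + 1) ≤ 1 / 2 := by
      rw [div_le_iff₀ (by positivity)]; nlinarith
    have h2 : t / (((k + 1 : ℕ) : ℝ) + 1) ^ 2 ≤ 1 / 4 := by
      rw [div_le_iff₀ (by positivity)]; nlinarith
    linarith

theorem not_isPreconnected_Fomega_diff_half_smul_tip_zero :
    ¬ IsPreconnected (Fomega \ {(1 / 2 : ℝ) • tip 0}) := by
  intro h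
  have hzero : (0 : ℝ × ℝ) ∈ Fomega \ {(1 / 2 : ℝ) • tip 0} :=
    ⟨zero_mem_Fomega, by simpa [eq_comm] using tip_ne_zero 0⟩
  have htip : tip 0 ∈ Fomega \ {(1 / 2 : ℝ) • tip 0} := by
    refine ⟨tip_mem_Fomega 0, fun h => ?_⟩
    have := (smul_tip_inj (by simpa using h) one_ne_zero).2
    norm_num at this
  obtain ⟨p, hp, hp1⟩ := h.intermediate_value hzero htip
    (f := fun p : ℝ × ℝ => p.1 + p.2) (by fun_prop) (by norm_num [tip] : (1 : ℝ) ∈ _)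
  exact hp.2 (eq_half_smul_tip_zero_of_fst_add_snd_eq_one hp.1 hp1)

def fanWithLegZeroOn (I : Set ℝ) : Set (ℝ × ℝ) := (· • tip 0) '' I ∪ ⋃ k, leg (k + 1)

theorem isPreconnected_fanWithLegZeroOn {I : Set ℝ} (hI : IsPreconnected I)
    (h0 : (0 : ℝ) ∈ I) :
    IsPreconnected (fanWithLegZeroOn I) :=
  (hI.image _ (continuous_id.smul continuous_const).continuousOn).union 0
    ⟨0, h0, zero_smul ℝ _⟩ (mem_iUnion.2 ⟨0, zero_mem_leg 1⟩)
    (isPreconnected_iUnion ⟨0, mem_iInter.2 fun k => zero_mem_leg (k + 1)⟩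
      fun k => isPreconnected_leg (k + 1))

theorem Fomega_diff_smul_tip_zero {t₀ : ℝ} (ht₀ : t₀ ≠ 0) :
    Fomega \ {t₀ • tip 0} = fanWithLegZeroOn (Icc 0 1 \ {t₀}) := by
  ext p
  constructor
  · rintro ⟨hp, hne⟩
    obtain ⟨k, t, ht, rfl⟩ := mem_Fomega.1 hp
    rcases k with _ | k
    · refine Or.inl ⟨t, ⟨ht, fun h => hne ?_⟩, rfl⟩
      rw [mem_singleton_iff.1 h]
      exact mem_singleton _
    · exact Or.inr (mem_iUnion.2 ⟨k, smul_tip_mem_leg _ ht⟩)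
  · rintro (⟨t, ⟨ht, htne⟩, rfl⟩ | hp)
    · exact ⟨smul_tip_mem_Fomega 0 ht, fun h => htne (smul_tip_inj h.symm ht₀).2.symm⟩
    · obtain ⟨k, t, ht, rfl⟩ := mem_iUnion.1 hp
      exact ⟨smul_tip_mem_Fomega _ ht,
        fun h => k.succ_ne_zero (smul_tip_inj (mem_singleton_iff.1 h).symm ht₀).1.symm⟩

theorem isPreconnected_Fomega_diff_tip_zero : IsPreconnected (Fomega \ {tip 0}) := by
  rw [← one_smul ℝ (tip 0), Fomega_diff_smul_tip_zero one_ne_zero, Icc_sdiff_right]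
  exact isPreconnected_fanWithLegZeroOn isPreconnected_Ico (left_mem_Ico.2 zero_lt_one)

theorem isUnionOfTwoPreconnected_Fomega_diff_half_smul_tip_zero :
    IsUnionOfTwoPreconnected (Fomega \ {(1 / 2 : ℝ) • tip 0}) := by
  have hsplit : Icc (0 : ℝ) 1 \ {1 / 2} = Ico 0 (1 / 2) ∪ Ioc (1 / 2) 1 := by
    ext t
    simp only [Set.mem_sdiff, mem_Icc, mem_singleton_iff, mem_union, mem_Ico, mem_Ioc]
    grind
  refine ⟨fanWithLegZeroOn (Ico 0 (1 / 2)), (· • tip 0) '' Ioc (1 / 2 : ℝ) 1,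
    isPreconnected_fanWithLegZeroOn isPreconnected_Ico (left_mem_Ico.2 (by norm_num)),
    isPreconnected_Ioc.image _ (continuous_id.smul continuous_const).continuousOn, ?_⟩
  rw [Fomega_diff_smul_tip_zero (by norm_num), hsplit, fanWithLegZeroOn, fanWithLegZeroOn,
    image_union, union_right_comm]

end Geometry

noncomputable section LegwiseMaps

theorem exists_smul_tip_eq (p : Fomega) : ∃ k, ∃ t ∈ Icc (0 : ℝ) 1, t • tip k = p :=
  mem_Fomega.1 p.2

def legIndex (p : Fomega) : ℕ := (exists_smul_tip_eq p).choose

def legParam (p : Fomega) : ℝ := (exists_smul_tip_eq p).choose_spec.choose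

theorem legParam_mem (p : Fomega) : legParam p ∈ Icc (0 : ℝ) 1 :=
  (exists_smul_tip_eq p).choose_spec.choose_spec.1

theorem legParam_smul_tip_legIndex (p : Fomega) : legParam p • tip (legIndex p) = p :=
  (exists_smul_tip_eq p).choose_spec.choose_spec.2

theorem isOpen_preimage_leg_diff_zero (k : ℕ) :
    IsOpen (((↑) : Fomega → ℝ × ℝ) ⁻¹' (leg k \ {0})) := by
  -- On `leg j \ {0}` the inverse slope is `j + 1`, so this window singles out `leg k`.
  refine isOpen_induced_iff.2 ⟨{p | p.2 ≠ 0} ∩ invSlope ⁻¹' Ioo (k + 1 / 2) (k + 3 / 2),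
    continuousOn_invSlope.isOpen_inter_preimage (isOpen_ne_fun continuous_snd continuous_const)
      isOpen_Ioo, ?_⟩
  ext ⟨p, hp⟩
  obtain ⟨j, t, ht, rfl⟩ := mem_Fomega.1 hp
  simp only [mem_preimage, mem_inter_iff]
  by_cases ht0 : t = 0
  · simp [ht0]
  rw [Set.mem_sdiff, mem_singleton_iff, smul_tip_mem_leg_iff ht ht0, smul_tip_eq_zero, mem_Ioo,
    invSlope_smul_tip ht0]
  constructor
  · rintro ⟨-, h1, h2⟩
    have hjk : j < k + 1 := by exact_mod_cast (by linarith : (j : ℝ) < k + 1)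
    have hkj : k < j + 1 := by exact_mod_cast (by linarith : (k : ℝ) < j + 1)
    exact ⟨by omega, ht0⟩
  · rintro ⟨rfl, -⟩
    exact ⟨smul_tip_snd_ne_zero ht0 j, by linarith, by linarith⟩

variable (σ : ℕ → ℕ) (φ : ℕ → ℝ → ℝ)
  (hφ : ∀ k, MapsTo (φ k) (Icc 0 1) (Icc 0 1))

def legwiseMap (p : Fomega) : Fomega :=
  ⟨φ (legIndex p) (legParam p) • tip (σ (legIndex p)),
    smul_tip_mem_Fomega _ (hφ _ (legParam_mem p))⟩

variable {σ φ}

theorem legwiseMap_coe (hφ0 : ∀ k, φ k 0 = 0) {p : Fomega} {k : ℕ} {t : ℝ}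
    (ht : t ∈ Icc (0 : ℝ) 1) (hp : t • tip k = p) :
    (legwiseMap σ φ hφ p : ℝ × ℝ) = φ k t • tip (σ k) := by
  have hrep := legParam_smul_tip_legIndex p
  by_cases ht0 : t = 0
  · subst ht0
    have : legParam p = 0 := smul_tip_eq_zero.1 (hrep.trans (hp.symm.trans (zero_smul ℝ _)))
    simp [legwiseMap, this, hφ0]
  · obtain ⟨rfl, rfl⟩ := smul_tip_inj (hp.trans hrep.symm) ht0
    rfl

theorem legwiseMap_leftInverse {τ : ℕ → ℕ} {ψ : ℕ → ℝ → ℝ}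
    (hψ : ∀ k, MapsTo (ψ k) (Icc 0 1) (Icc 0 1)) (hφ0 : ∀ k, φ k 0 = 0)
    (hψ0 : ∀ k, ψ k 0 = 0) (hτσ : ∀ k, τ (σ k) = k)
    (hψφ : ∀ k, ∀ t ∈ Icc (0 : ℝ) 1, ψ (σ k) (φ k t) = t) :
    Function.LeftInverse (legwiseMap τ ψ hψ) (legwiseMap σ φ hφ) := fun p => by
  have h := legwiseMap_coe (σ := σ) hφ hφ0 (legParam_mem p) (legParam_smul_tip_legIndex p)
  apply Subtype.ext
  rw [legwiseMap_coe hψ hψ0 (hφ _ (legParam_mem p)) h.symm, hτσ, hψφ _ _ (legParam_mem p),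
    legParam_smul_tip_legIndex]

theorem continuousOn_legwiseMap_leg (hφ0 : ∀ k, φ k 0 = 0) {k : ℕ}
    (hk : ContinuousOn (φ k) (Icc 0 1)) :
    ContinuousOn (fun p => (legwiseMap σ φ hφ p : ℝ × ℝ))
      (((↑) : Fomega → ℝ × ℝ) ⁻¹' leg k) := by
  have hparam : ∀ p ∈ ((↑) : Fomega → ℝ × ℝ) ⁻¹' leg k,
      ∃ t ∈ Icc (0 : ℝ) 1, t • tip k = p ∧ (p : ℝ × ℝ).1 * (k + 1) = t := by
    rintro p ⟨t, ht, hp⟩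
    refine ⟨t, ht, hp, ?_⟩
    rw [← hp, smul_tip_fst]
    field_simp
  refine ContinuousOn.congr
    (f := fun p : Fomega => φ k ((p : ℝ × ℝ).1 * (k + 1)) • tip (σ k))
    ((hk.comp (by fun_prop) fun p hp => ?_).smul continuousOn_const) fun p hp => ?_
  all_goals obtain ⟨t, ht, hp, hpt⟩ := hparam p hp
  · exact hpt ▸ ht
  · simp only [legwiseMap_coe hφ hφ0 ht hp, hpt]

theorem continuous_legwiseMap (hφ0 : ∀ k, φ k 0 = 0) (S : Finset ℕ)
    (hσ : ∀ k ∉ S, σ k = k) (hφS : ∀ k ∉ S, φ k = id)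
    (hcont : ∀ k ∈ S, ContinuousOn (φ k) (Icc 0 1)) :
    Continuous (legwiseMap σ φ hφ) := by
  set C : Set Fomega := (⋃ k ∈ S, ((↑) : Fomega → ℝ × ℝ) ⁻¹' (leg k \ {0}))ᶜ
  have hC : ∀ p ∈ C, (legwiseMap σ φ hφ p : ℝ × ℝ) = p := fun p hp => by
    obtain ⟨k, t, ht, hkt⟩ := exists_smul_tip_eq p
    rw [legwiseMap_coe hφ hφ0 ht hkt, ← hkt]
    by_cases ht0 : t = 0
    · simp [ht0, hφ0]
    have hk : k ∉ S := fun hk => hp (mem_biUnion hk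
      ⟨hkt ▸ smul_tip_mem_leg k ht, hkt ▸ (smul_tip_eq_zero.not.2 ht0)⟩)
    rw [hσ k hk, hφS k hk, id]
  have hcover : (⋃ k : S, ((↑) : Fomega → ℝ × ℝ) ⁻¹' leg k) ∪ C = univ := by
    refine eq_univ_of_forall fun p => ?_
    by_cases hp : p ∈ C
    · exact Or.inr hp
    · obtain ⟨k, hk, hpk⟩ := mem_iUnion₂.1 (not_not.1 hp)
      exact Or.inl (mem_iUnion.2 ⟨⟨k, hk⟩, hpk.1⟩)
  refine continuous_induced_rng.2 (continuousOn_univ.1 (hcover ▸ ?_))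
  refine ContinuousOn.union_of_isClosed ?_ ?_ ?_ ?_
  · exact (locallyFinite_of_finite _).continuousOn_iUnion
      (fun k => (isCompact_leg k).isClosed.preimage continuous_subtype_val)
      fun k => continuousOn_legwiseMap_leg hφ hφ0 (hcont k k.2)
  · exact continuous_subtype_val.continuousOn.congr hC
  · exact isClosed_iUnion_of_finite fun k =>
      (isCompact_leg k).isClosed.preimage continuous_subtype_val
  · exact isClosed_compl_iff.2 (isOpen_biUnion fun k _ => isOpen_preimage_leg_diff_zero k)

end LegwiseMaps

noncomputable section Homeomorphisms

def swapLegs (i j : ℕ) : Fomega ≃ₜ Fomega :=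
  have hinv := legwiseMap_leftInverse (fun _ => mapsTo_id _) (fun _ => mapsTo_id _)
    (fun _ => rfl) (fun _ => rfl) (Equiv.swap_apply_self i j) fun _ _ _ => rfl
  have hcont := continuous_legwiseMap (fun _ => mapsTo_id _) (fun _ => rfl) {i, j}
    (fun _ hk => Equiv.swap_apply_of_ne_of_ne (by simp_all) (by simp_all)) (fun _ _ => rfl)
    fun _ _ => continuousOn_id
  ⟨⟨_, _, hinv, hinv⟩, hcont, hcont⟩

theorem swapLegs_coe (i j : ℕ) {p : Fomega} {k : ℕ} {t : ℝ} (ht : t ∈ Icc (0 : ℝ) 1)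
    (hp : t • tip k = p) : (swapLegs i j p : ℝ × ℝ) = t • tip (Equiv.swap i j k) :=
  legwiseMap_coe _ (fun _ => rfl) ht hp

def rpowOnLeg (k : ℕ) (a : ℝ) (j : ℕ) (t : ℝ) : ℝ := if j = k then t ^ a else t

theorem rpowOnLeg_mapsTo (k : ℕ) {a : ℝ} (ha : 0 ≤ a) (j : ℕ) :
    MapsTo (rpowOnLeg k a j) (Icc 0 1) (Icc 0 1) := fun t ⟨h0, h1⟩ => by
  unfold rpowOnLeg
  split_ifs
  exacts [⟨Real.rpow_nonneg h0 a, Real.rpow_le_one h0 h1 ha⟩, ⟨h0, h1⟩]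

theorem rpowOnLeg_zero (k : ℕ) {a : ℝ} (ha : a ≠ 0) (j : ℕ) : rpowOnLeg k a j 0 = 0 := by
  simp [rpowOnLeg, Real.zero_rpow ha]

theorem rpowOnLeg_rpowOnLeg (k : ℕ) {a b : ℝ} (hab : a * b = 1) (j : ℕ) {t : ℝ}
    (ht : 0 ≤ t) :
    rpowOnLeg k b j (rpowOnLeg k a j t) = t := by
  unfold rpowOnLeg
  split_ifs
  · rw [← Real.rpow_mul ht, hab, Real.rpow_one]
  · rfl

theorem continuous_rpowOnLeg (k : ℕ) {a : ℝ} (ha : 0 ≤ a) (j : ℕ) :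
    Continuous (rpowOnLeg k a j) := by
  unfold rpowOnLeg
  split_ifs
  exacts [Real.continuous_rpow_const ha, continuous_id]

theorem continuous_legwiseMap_rpowOnLeg (k : ℕ) {a : ℝ} (ha : 0 < a) :
    Continuous (legwiseMap id (rpowOnLeg k a) (rpowOnLeg_mapsTo k ha.le)) :=
  continuous_legwiseMap _ (rpowOnLeg_zero k ha.ne') {k} (fun _ _ => rfl)
    (fun _ hj => funext fun _ => if_neg (Finset.notMem_singleton.1 hj))
    fun j _ => (continuous_rpowOnLeg k ha.le j).continuousOn

theorem leftInverse_legwiseMap_rpowOnLeg (k : ℕ) {a b : ℝ} (ha : 0 < a) (hb : 0 < b)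
    (hab : a * b = 1) :
    Function.LeftInverse (legwiseMap id (rpowOnLeg k b) (rpowOnLeg_mapsTo k hb.le))
      (legwiseMap id (rpowOnLeg k a) (rpowOnLeg_mapsTo k ha.le)) :=
  legwiseMap_leftInverse _ _ (rpowOnLeg_zero k ha.ne') (rpowOnLeg_zero k hb.ne') (fun _ => rfl)
    fun j _ ht => rpowOnLeg_rpowOnLeg k hab j ht.1

def rpowLeg (k : ℕ) {a : ℝ} (ha : 0 < a) : Fomega ≃ₜ Fomega :=
  ⟨⟨_, _, leftInverse_legwiseMap_rpowOnLeg k ha (inv_pos.2 ha) (mul_inv_cancel₀ ha.ne'),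
    leftInverse_legwiseMap_rpowOnLeg k (inv_pos.2 ha) ha (inv_mul_cancel₀ ha.ne')⟩,
    continuous_legwiseMap_rpowOnLeg k ha, continuous_legwiseMap_rpowOnLeg k (inv_pos.2 ha)⟩

theorem rpowLeg_coe (k : ℕ) {a : ℝ} (ha : 0 < a) {p : Fomega} {t : ℝ}
    (ht : t ∈ Icc (0 : ℝ) 1) (hp : t • tip k = p) :
    (rpowLeg k ha p : ℝ × ℝ) = t ^ a • tip k :=
  (legwiseMap_coe (rpowOnLeg_mapsTo k ha.le) (rpowOnLeg_zero k ha.ne') ht hp).trans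
    (by simp [rpowOnLeg])

theorem exists_rpow_eq {s u : ℝ} (hs : s ∈ Ioo (0 : ℝ) 1) (hu : u ∈ Ioo (0 : ℝ) 1) :
    ∃ a : ℝ, 0 < a ∧ s ^ a = u := by
  have hlogs : Real.log s < 0 := Real.log_neg hs.1 hs.2
  refine ⟨Real.log u / Real.log s, div_pos_of_neg_of_neg (Real.log_neg hu.1 hu.2) hlogs, ?_⟩
  rw [Real.rpow_def_of_pos hs.1, mul_div_cancel₀ _ hlogs.ne, Real.exp_log hu.1]

end Homeomorphisms

noncomputable section ThreePoints

def fanTop : Fomega := ⟨0, zero_mem_Fomega⟩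

def fanTip : Fomega := ⟨tip 0, tip_mem_Fomega 0⟩

def fanMid : Fomega := ⟨(1 / 2 : ℝ) • tip 0, smul_tip_mem_Fomega 0 (by norm_num)⟩

theorem mem_orbit_fanTop_or_fanTip_or_fanMid (x : Fomega) :
    x ∈ orbit Fomega fanTop ∨ x ∈ orbit Fomega fanTip ∨ x ∈ orbit Fomega fanMid := by
  obtain ⟨k, t, ht, hx⟩ := exists_smul_tip_eq x
  have hswap : t • tip 0 = swapLegs k 0 x := by rw [swapLegs_coe k 0 ht hx, Equiv.swap_apply_left]
  rcases ht.1.eq_or_lt with rfl | ht0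
  · obtain rfl : x = fanTop := Subtype.ext (by rw [← hx, zero_smul]; rfl)
    exact Or.inl (mem_orbit_self _)
  rcases ht.2.eq_or_lt with rfl | ht1
  · refine Or.inr (Or.inl (mem_orbit_symm ⟨swapLegs k 0, Subtype.ext ?_⟩))
    rw [← hswap, one_smul]
    rfl
  obtain ⟨a, ha, hta⟩ := exists_rpow_eq ⟨ht0, ht1⟩ (by norm_num : (1 / 2 : ℝ) ∈ Ioo 0 1)
  refine Or.inr (Or.inr (mem_orbit_symm ⟨(swapLegs k 0).trans (rpowLeg 0 ha), Subtype.ext ?_⟩))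
  rw [Homeomorph.trans_apply, rpowLeg_coe 0 ha ht hswap, hta]
  rfl

theorem isPreconnected_compl_fanTip : IsPreconnected ({fanTip}ᶜ : Set Fomega) := by
  rw [← IsInducing.subtypeVal.isPreconnected_image, image_val_compl_singleton]
  exact isPreconnected_Fomega_diff_tip_zero

theorem not_isPreconnected_compl_fanMid : ¬ IsPreconnected ({fanMid}ᶜ : Set Fomega) := by
  rw [← IsInducing.subtypeVal.isPreconnected_image, image_val_compl_singleton]
  exact not_isPreconnected_Fomega_diff_half_smul_tip_zero

theorem isUnionOfTwoPreconnected_compl_fanMid :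
    IsUnionOfTwoPreconnected ({fanMid}ᶜ : Set Fomega) := by
  rw [← isUnionOfTwoPreconnected_image_iff IsEmbedding.subtypeVal, image_val_compl_singleton]
  exact isUnionOfTwoPreconnected_Fomega_diff_half_smul_tip_zero

theorem not_isUnionOfTwoPreconnected_compl_fanTop :
    ¬ IsUnionOfTwoPreconnected ({fanTop}ᶜ : Set Fomega) := by
  rw [← isUnionOfTwoPreconnected_image_iff IsEmbedding.subtypeVal, image_val_compl_singleton]
  exact not_isUnionOfTwoPreconnected_Fomega_diff_zero

end ThreePoints

/-- The fan `F_ω` is `1/3`-homogeneous. -/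
theorem Fomega_oneThirdHomogeneous : OneOverHomogeneous Fomega 3 := by
  refine oneOverHomogeneous_three mem_orbit_fanTop_or_fanTip_or_fanMid (fun h => ?_)
    (fun h => ?_) fun h => ?_
  · exact not_isUnionOfTwoPreconnected_compl_fanTop
      ((isUnionOfTwoPreconnected_compl_singleton_iff_of_mem_orbit h).1
        ⟨_, _, isPreconnected_compl_fanTip, isPreconnected_compl_fanTip, union_self _⟩)
  · exact not_isUnionOfTwoPreconnected_compl_fanTop
      ((isUnionOfTwoPreconnected_compl_singleton_iff_of_mem_orbit h).1
        isUnionOfTwoPreconnected_compl_fanMid)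
  · exact not_isPreconnected_compl_fanMid
      ((isPreconnected_compl_singleton_iff_of_mem_orbit h).2 isPreconnected_compl_fanTip)

end FansHomogeneity
end

section
/- The Cantor fan F_C is 1/3-homogeneous. -/
open Set Filter Topology Metric

namespace FansHomogeneity

/-! The homeomorphisms `[(c, t)] ↦ [(g c, φ t)]`, for homeomorphisms `g` of the (homogeneous)
Cantor set and `φ` of `[0, 1]` fixing `1`, act transitively on each of three sets: the vertex, the
points at height `t = 0`, and the points at height `0 < t < 1`. Two topological invariants separate
these sets. Removing the vertex disconnects the fan, while removing any other point does not, since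
every leg is a limit of other legs. A point at height `0 < t < 1` lies inside an arc, its leg. A
point at height `0` does not: a connected set missing the vertex lies in a single leg, so the height
is injective along an arc near such a point, and an injective continuous function on an interval
has no minimum at an interior point. -/

open scoped unitInterval

section Invariants

variable {X Y : Type*} [TopologicalSpace X] [TopologicalSpace Y]

def IsArcInteriorPoint (x : X) : Prop :=
  ∃ (A : Set X) (p q : X), IsArcWith A p q ∧ x ∈ A ∧ x ≠ p ∧ x ≠ q

theorem IsArcWith.image {A : Set X} {p q : X} (hA : IsArcWith A p q) (g : X ≃ₜ Y) :
    IsArcWith (g '' A) (g p) (g q) := by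
  obtain ⟨h, hp, hq⟩ := hA
  exact ⟨h.trans (g.image A), by simp [hp], by simp [hq]⟩

theorem IsArcInteriorPoint.image {x : X} (hx : IsArcInteriorPoint x) (g : X ≃ₜ Y) :
    IsArcInteriorPoint (g x) := by
  obtain ⟨A, p, q, hA, hxA, hxp, hxq⟩ := hx
  exact ⟨g '' A, g p, g q, hA.image g, mem_image_of_mem g hxA, g.injective.ne hxp,
    g.injective.ne hxq⟩

theorem isPreconnected_compl_singleton_apply (g : X ≃ₜ Y) {x : X}
    (hx : IsPreconnected ({x}ᶜ : Set X)) : IsPreconnected ({g x}ᶜ : Set Y) := by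
  simpa [image_compl_eq g.bijective] using hx.image g g.continuous.continuousOn

/-- Along an arc through `x`, `f` is strictly monotone near `x`, so it has no minimum there. -/
theorem not_isArcInteriorPoint_of_isMinOn {δ : Type*} [LinearOrder δ] [TopologicalSpace δ]
    [OrderClosedTopology δ] {f : X → δ} {U : Set X} {x : X} (hf : Continuous f) (hU : U ∈ 𝓝 x)
    (hmin : IsMinOn f U x) (hinj : ∀ S ⊆ U, IsPreconnected S → InjOn f S) :
    ¬ IsArcInteriorPoint x := by
  rintro ⟨A, p, q, ⟨h, rfl, rfl⟩, hxA, hx0, hx1⟩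
  set γ : I → X := fun s => h s
  have hγ : Continuous γ := continuous_subtype_val.comp h.continuous
  set s₀ := h.symm ⟨x, hxA⟩
  have hγs₀ : γ s₀ = x := by simp [γ, s₀]
  have hs₀ : 0 < s₀ ∧ s₀ < 1 := by
    refine ⟨unitInterval.nonneg'.lt_of_ne fun h0 => hx0 ?_,
      unitInterval.le_one'.lt_of_ne fun h1 => hx1 ?_⟩
    · rw [← hγs₀, ← h0]
    · rw [← hγs₀, h1]
  obtain ⟨l, u, hs₀lu, hlu⟩ := (mem_nhds_iff_exists_Ioo_subset' ⟨0, hs₀.1⟩ ⟨1, hs₀.2⟩).mp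
    (hγ.continuousAt.preimage_mem_nhds (hγs₀ ▸ hU))
  have hmono : StrictMonoOn (f ∘ γ) (Ioo l u) ∨ StrictAntiOn (f ∘ γ) (Ioo l u) := by
    refine ContinuousOn.strictMonoOn_of_injOn_Ioo (hs₀lu.1.trans hs₀lu.2)
      (hf.comp hγ).continuousOn ?_
    refine (hinj _ (image_subset_iff.mpr hlu) (isPreconnected_Ioo.image _ hγ.continuousOn)).comp
      ?_ (mapsTo_image _ _)
    exact (Subtype.val_injective.comp h.injective).injOn
  obtain ⟨a, hla, has₀⟩ := exists_between hs₀lu.1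
  obtain ⟨b, hs₀b, hbu⟩ := exists_between hs₀lu.2
  have hmin' : ∀ s ∈ Ioo l u, f x ≤ f (γ s) := fun s hs => hmin (hlu hs)
  rcases hmono with hmono | hmono
  · exact (hmin' a ⟨hla, has₀.trans hs₀lu.2⟩).not_gt
      (hγs₀ ▸ hmono ⟨hla, has₀.trans hs₀lu.2⟩ hs₀lu has₀)
  · exact (hmin' b ⟨hs₀lu.1.trans hs₀b, hbu⟩).not_gt
      (hγs₀ ▸ hmono hs₀lu ⟨hs₀lu.1.trans hs₀b, hbu⟩ hs₀b)

theorem orbit_apply (g : X ≃ₜ X) (x : X) : orbit X (g x) = orbit X x := by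
  ext y
  constructor
  · rintro ⟨h, rfl⟩
    exact ⟨g.trans h, rfl⟩
  · rintro ⟨h, rfl⟩
    exact ⟨g.symm.trans h, by simp⟩

theorem orbit_ne_of_invariant {P : X → Prop} (hP : ∀ (g : X ≃ₜ X) x, P x → P (g x)) {x y : X}
    (hx : P x) (hy : ¬ P y) : orbit X x ≠ orbit X y := by
  intro hxy
  obtain ⟨g, rfl⟩ : y ∈ orbit X x := hxy ▸ ⟨Homeomorph.refl X, rfl⟩
  exact hy (hP g x hx)

end Invariants

section CantorSet

instance : Zero cantorSet := ⟨⟨0, zero_mem_cantorSet⟩⟩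

@[simp] theorem cantorSet.coe_zero : ((0 : cantorSet) : ℝ) = 0 := rfl

theorem cantorSet_homogeneous (a b : cantorSet) : ∃ g : cantorSet ≃ₜ cantorSet, g a = b := by
  set e := cantorSetHomeomorphNatToBool
  exact ⟨(e.trans (Homeomorph.addLeft (e b - e a))).trans e.symm, by simp⟩

theorem isTotallyDisconnected_cantorSet : IsTotallyDisconnected cantorSet :=
  have := cantorSetHomeomorphNatToBool.symm.totallyDisconnectedSpace
  totallyDisconnectedSpace_subtype_iff.mp this

theorem exists_notMem_cantorSet_between {a b : ℝ} (ha : a ∈ cantorSet) (hb : b ∈ cantorSet)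
    (hab : a < b) : ∃ r ∉ cantorSet, a < r ∧ r < b := by
  by_contra! h
  have hsub : Icc a b ⊆ cantorSet := fun r hr => by
    rcases hr.1.eq_or_lt with rfl | har
    · exact ha
    rcases hr.2.eq_or_lt with rfl | hrb
    · exact hb
    exact not_not.mp fun hr' => (h r hr' har).not_gt hrb
  exact hab.ne (isTotallyDisconnected_cantorSet _ hsub isPreconnected_Icc
    (left_mem_Icc.mpr hab.le) (right_mem_Icc.mpr hab.le))

theorem div_three_pow_mem_cantorSet {x : ℝ} (hx : x ∈ cantorSet) (n : ℕ) :
    x / 3 ^ n ∈ cantorSet := by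
  induction n with
  | zero => simpa using hx
  | succ n ih =>
    rw [cantorSet_eq_union_halves]
    exact Or.inl ⟨_, ih, by simp only [pow_succ, div_div]⟩

theorem zero_mem_closure_compl_zero : (0 : cantorSet) ∈ closure {0}ᶜ := by
  have hmem (n : ℕ) : 1 / 4 / 3 ^ n ∈ cantorSet :=
    div_three_pow_mem_cantorSet quarter_mem_cantorSet n
  refine mem_closure_of_tendsto (f := fun n => ⟨1 / 4 / 3 ^ n, hmem n⟩) (b := atTop) ?_
    (Eventually.of_forall fun n h => by simpa using congrArg Subtype.val h)
  exact tendsto_subtype_rng.mpr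
    (tendsto_const_nhds.div_atTop (tendsto_pow_atTop_atTop_of_one_lt (by norm_num)))

end CantorSet

namespace unitInterval

noncomputable def half : I := ⟨1 / 2, by norm_num, by norm_num⟩

@[simp] theorem coe_half : (half : ℝ) = 1 / 2 := rfl

theorem half_ne_zero : half ≠ 0 := by norm_num [Subtype.ext_iff]

theorem half_ne_one : half ≠ 1 := by norm_num [Subtype.ext_iff]

noncomputable def rpowHomeomorph (α : ℝ) (hα : 0 < α) : I ≃ₜ I where
  toFun t := ⟨t ^ α, Real.rpow_nonneg t.2.1 α, Real.rpow_le_one t.2.1 t.2.2 hα.le⟩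
  invFun t :=
    ⟨t ^ α⁻¹, Real.rpow_nonneg t.2.1 _, Real.rpow_le_one t.2.1 t.2.2 (inv_pos.mpr hα).le⟩
  left_inv t := Subtype.ext (Real.rpow_rpow_inv t.2.1 hα.ne')
  right_inv t := Subtype.ext (Real.rpow_inv_rpow t.2.1 hα.ne')
  continuous_toFun := (continuous_subtype_val.rpow_const fun _ => Or.inr hα.le).subtype_mk _
  continuous_invFun :=
    (continuous_subtype_val.rpow_const fun _ => Or.inr (inv_pos.mpr hα).le).subtype_mk _

theorem exists_homeomorph_one_apply {t s : I} (ht : (t : ℝ) ∈ Ioo 0 1)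
    (hs : (s : ℝ) ∈ Ioo 0 1) : ∃ φ : I ≃ₜ I, φ 1 = 1 ∧ φ t = s := by
  have hlogt : Real.log t < 0 := Real.log_neg ht.1 ht.2
  have hα : 0 < Real.log s / Real.log t := div_pos_of_neg_of_neg (Real.log_neg hs.1 hs.2) hlogt
  refine ⟨rpowHomeomorph _ hα, Subtype.ext (Real.one_rpow _), Subtype.ext ?_⟩
  change (t : ℝ) ^ (Real.log s / Real.log t) = s
  rw [Real.rpow_def_of_pos ht.1, mul_div_cancel₀ _ hlogt.ne, Real.exp_log hs.1]

end unitInterval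

namespace CantorFan

def mk (c : cantorSet) (t : I) : CantorFan := Quot.mk _ (c, t)

def vertex : CantorFan := mk 0 1

theorem mk_surjective (x : CantorFan) : ∃ c t, mk c t = x := by
  obtain ⟨⟨c, t⟩, rfl⟩ := Quot.exists_rep x
  exact ⟨c, t, rfl⟩

theorem mk_one (c : cantorSet) : mk c 1 = vertex := Quot.sound ⟨rfl, rfl⟩

theorem continuous_mk : Continuous fun p : cantorSet × I => mk p.1 p.2 := continuous_quot_mk

theorem continuous_mk_left (t : I) : Continuous fun c => mk c t :=
  continuous_mk.comp (continuous_id.prodMk continuous_const)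

theorem continuous_mk_right (c : cantorSet) : Continuous (mk c) :=
  continuous_mk.comp (continuous_const.prodMk continuous_id)

def height : CantorFan → I := Quot.lift Prod.snd fun _ _ h => h.1.trans h.2.symm

@[simp] theorem height_mk (c : cantorSet) (t : I) : height (mk c t) = t := rfl

theorem continuous_height : Continuous height := continuous_quot_lift _ continuous_snd

theorem height_eq_one_iff {x : CantorFan} : height x = 1 ↔ x = vertex := by
  obtain ⟨c, t, rfl⟩ := mk_surjective x
  refine ⟨fun h => ?_, fun h => h ▸ rfl⟩
  rw [height_mk] at h
  rw [h, mk_one]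

theorem mk_ne_vertex {c : cantorSet} {t : I} (ht : t ≠ 1) : mk c t ≠ vertex :=
  fun h => ht (height_eq_one_iff.mpr h)

theorem isOpen_compl_vertex : IsOpen ({vertex}ᶜ : Set CantorFan) := by
  convert (isOpen_compl_singleton (x := (1 : I))).preimage continuous_height using 1
  ext x
  simp [height_eq_one_iff]

/-- Its sign tells on which side of `r` the leg through the point lies. -/
def legOffset (r : ℝ) : CantorFan → ℝ :=
  Quot.lift (fun p => (1 - p.2) * (p.1 - r)) fun _ _ h => by simp [h.1, h.2]

theorem continuous_legOffset (r : ℝ) : Continuous (legOffset r) :=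
  continuous_quot_lift _ (by fun_prop)

theorem eq_vertex_of_legOffset_eq_zero {r : ℝ} (hr : r ∉ cantorSet) {x : CantorFan}
    (hx : legOffset r x = 0) : x = vertex := by
  obtain ⟨c, t, rfl⟩ := mk_surjective x
  rcases mul_eq_zero.mp hx with ht | hc
  · rw [← mk_one c]
    congr
    exact Subtype.ext (sub_eq_zero.mp ht).symm
  · exact absurd (sub_eq_zero.mp hc ▸ c.2) hr

theorem eq_of_mk_mem_of_isPreconnected {S : Set CantorFan} (hS : IsPreconnected S)
    (hv : vertex ∉ S) {c c' : cantorSet} {t t' : I} (h : mk c t ∈ S) (h' : mk c' t' ∈ S) :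
    c = c' := by
  by_contra hne
  wlog hlt : (c : ℝ) < c' generalizing c c' t t'
  · exact this h' h (Ne.symm hne)
      ((not_lt.mp hlt).lt_of_ne (Subtype.coe_injective.ne (Ne.symm hne)))
  obtain ⟨r, hr, hcr, hrc'⟩ := exists_notMem_cantorSet_between c.2 c'.2 hlt
  have h0 : (0 : ℝ) ∈ Icc (legOffset r (mk c t)) (legOffset r (mk c' t')) :=
    ⟨mul_nonpos_of_nonneg_of_nonpos (sub_nonneg.mpr t.2.2) (sub_nonpos.mpr hcr.le),
      mul_nonneg (sub_nonneg.mpr t'.2.2) (sub_nonneg.mpr hrc'.le)⟩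
  obtain ⟨x, hxS, hx⟩ := hS.intermediate_value h h' (continuous_legOffset r).continuousOn h0
  exact hv (eq_vertex_of_legOffset_eq_zero hr hx ▸ hxS)

theorem injOn_height {S : Set CantorFan} (hS : IsPreconnected S) (hv : vertex ∉ S) :
    InjOn height S := by
  intro x hx y hy hxy
  obtain ⟨c, t, rfl⟩ := mk_surjective x
  obtain ⟨c', t', rfl⟩ := mk_surjective y
  rw [height_mk, height_mk] at hxy
  rw [eq_of_mk_mem_of_isPreconnected hS hv hx hy, hxy]

theorem not_isPreconnected_compl_vertex : ¬ IsPreconnected ({vertex}ᶜ : Set CantorFan) := by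
  intro h
  have := eq_of_mk_mem_of_isPreconnected h (fun hv => hv rfl)
    (c := 0) (c' := ⟨1 / 4, quarter_mem_cantorSet⟩) (t := 0) (t' := 0)
    (mk_ne_vertex zero_ne_one) (mk_ne_vertex zero_ne_one)
  norm_num [Subtype.ext_iff] at this

theorem isPreconnected_compl_mk_zero {t₀ : I} (ht₀ : t₀ ≠ 1) :
    IsPreconnected ({mk 0 t₀}ᶜ : Set CantorFan) := by
  set A := ⋃ c : ({0}ᶜ : Set cantorSet), range (mk c)
  have hA : IsPreconnected A :=
    isPreconnected_iUnion ⟨vertex, mem_iInter.mpr fun c => ⟨1, mk_one c⟩⟩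
      fun c => isPreconnected_range (continuous_mk_right c)
  refine hA.subset_closure ?_ fun x _ => ?_
  · rintro _ ⟨_, ⟨c, rfl⟩, t, rfl⟩ h
    exact c.2 (eq_of_mk_mem_of_isPreconnected isPreconnected_singleton
      (fun hv => mk_ne_vertex ht₀ hv.symm) h (mem_singleton _))
  · obtain ⟨c, t, rfl⟩ := mk_surjective x
    have hclosure : c ∈ closure ({0}ᶜ : Set cantorSet) := by
      by_cases hc : c = 0
      · exact hc ▸ zero_mem_closure_compl_zero
      · exact subset_closure hc
    exact map_mem_closure (f := fun c => mk c t) (continuous_mk_left t) hclosure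
      fun c hc => mem_iUnion.mpr ⟨⟨c, hc⟩, t, rfl⟩

theorem isArcWith_range_mk (c : cantorSet) : IsArcWith (range (mk c)) (mk c 0) (mk c 1) :=
  ⟨(Function.LeftInverse.isEmbedding (f := height) (fun _ => rfl) continuous_height
    (continuous_mk_right c)).toHomeomorph, rfl, rfl⟩

theorem isArcInteriorPoint_mk {c : cantorSet} {t : I} (ht₀ : t ≠ 0) (ht₁ : t ≠ 1) :
    IsArcInteriorPoint (mk c t) :=
  ⟨_, _, _, isArcWith_range_mk c, mem_range_self t, fun h => ht₀ (congrArg height h),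
    fun h => ht₁ (congrArg height h)⟩

theorem not_isArcInteriorPoint_mk_zero (c : cantorSet) : ¬ IsArcInteriorPoint (mk c 0) :=
  not_isArcInteriorPoint_of_isMinOn continuous_height
    (isOpen_compl_vertex.mem_nhds (mk_ne_vertex zero_ne_one))
    (fun _ _ => unitInterval.nonneg') fun _ hS hSc => injOn_height hSc fun hv => hS hv rfl

def homeomorphOfProd (g : cantorSet ≃ₜ cantorSet) (φ : I ≃ₜ I) (hφ : φ 1 = 1) :
    CantorFan ≃ₜ CantorFan where
  toFun := Quot.lift (fun p => mk (g p.1) (φ p.2)) fun _ _ h => by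
    simp only [h.1, h.2, hφ, mk_one]
  invFun := Quot.lift (fun p => mk (g.symm p.1) (φ.symm p.2)) fun _ _ h => by
    simp only [h.1, h.2, φ.symm_apply_eq.mpr hφ.symm, mk_one]
  left_inv := Quot.ind fun p => congrArg₂ mk (g.symm_apply_apply p.1) (φ.symm_apply_apply p.2)
  right_inv := Quot.ind fun p => congrArg₂ mk (g.apply_symm_apply p.1) (φ.apply_symm_apply p.2)
  continuous_toFun :=
    continuous_quot_lift _ (continuous_mk.comp (g.continuous.prodMap φ.continuous))
  continuous_invFun :=
    continuous_quot_lift _ (continuous_mk.comp (g.symm.continuous.prodMap φ.symm.continuous))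

@[simp] theorem homeomorphOfProd_mk (g : cantorSet ≃ₜ cantorSet) (φ : I ≃ₜ I) (hφ : φ 1 = 1)
    (c : cantorSet) (t : I) : homeomorphOfProd g φ hφ (mk c t) = mk (g c) (φ t) := rfl

theorem orbit_eq_vertex_or_mk_zero_or_mk_half (x : CantorFan) :
    orbit CantorFan x = orbit CantorFan vertex ∨ orbit CantorFan x = orbit CantorFan (mk 0 0) ∨
      orbit CantorFan x = orbit CantorFan (mk 0 unitInterval.half) := by
  obtain ⟨c, t, rfl⟩ := mk_surjective x
  obtain ⟨g, hg⟩ := cantorSet_homogeneous c 0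
  rcases eq_or_ne t 1 with rfl | ht₁
  · exact Or.inl (by rw [mk_one])
  rcases eq_or_ne t 0 with rfl | ht₀
  · refine Or.inr (Or.inl ?_)
    exact (orbit_apply (homeomorphOfProd g (.refl I) rfl) (mk c 0)).symm.trans
      (congrArg (orbit CantorFan) (congrArg (mk · 0) hg))
  refine Or.inr (Or.inr ?_)
  obtain ⟨φ, hφ, hφt⟩ := unitInterval.exists_homeomorph_one_apply
    (t := t) (s := unitInterval.half)
    ⟨unitInterval.nonneg'.lt_of_ne (Ne.symm (by exact_mod_cast ht₀)),
      unitInterval.le_one'.lt_of_ne (by exact_mod_cast ht₁)⟩ (by norm_num [unitInterval.half])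
  rw [← orbit_apply (homeomorphOfProd g φ hφ), homeomorphOfProd_mk, hg, hφt]

theorem orbit_vertex_ne_orbit_of_isPreconnected {x : CantorFan}
    (hx : IsPreconnected ({x}ᶜ : Set CantorFan)) : orbit CantorFan vertex ≠ orbit CantorFan x :=
  (orbit_ne_of_invariant (P := fun y => IsPreconnected ({y}ᶜ : Set CantorFan))
    (fun g _ => isPreconnected_compl_singleton_apply g) hx
    not_isPreconnected_compl_vertex).symm

theorem orbit_mk_zero_ne_orbit_mk_half :
    orbit CantorFan (mk 0 0) ≠ orbit CantorFan (mk 0 unitInterval.half) :=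
  (orbit_ne_of_invariant (fun g _ hx => hx.image g)
    (isArcInteriorPoint_mk unitInterval.half_ne_zero unitInterval.half_ne_one)
    (not_isArcInteriorPoint_mk_zero 0)).symm

theorem orbits_eq :
    orbits CantorFan = {orbit _ vertex, orbit _ (mk 0 0), orbit _ (mk 0 unitInterval.half)} := by
  ext A
  constructor
  · rintro ⟨x, rfl⟩
    simpa using orbit_eq_vertex_or_mk_zero_or_mk_half x
  · rintro (rfl | rfl | rfl) <;> exact ⟨_, rfl⟩

end CantorFan

/-- The Cantor fan `F_C` is `1/3`-homogeneous. -/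
theorem cantorFan_oneThirdHomogeneous : OneOverHomogeneous CantorFan 3 :=
  ncard_eq_three.mpr ⟨_, _, _,
    CantorFan.orbit_vertex_ne_orbit_of_isPreconnected
      (CantorFan.isPreconnected_compl_mk_zero zero_ne_one),
    CantorFan.orbit_vertex_ne_orbit_of_isPreconnected
      (CantorFan.isPreconnected_compl_mk_zero unitInterval.half_ne_one),
    CantorFan.orbit_mk_zero_ne_orbit_mk_half, CantorFan.orbits_eq⟩

end FansHomogeneity
end
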